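/- Let ρ1, ρ2 be density matrices on a finite-dimensional complex inner product space. Let H∩ = support(ρ1) ∩ support(ρ2), let Π' be the orthogonal projection onto the orthogonal complement H' of H∩, and assume N_i = Tr(ρ_i Π') > 0 for i = 1, 2; set ρ'_i = Π' ρ_i Π' / N_i. If (F1, F2, F?) is a USD POVM for (ρ1, ρ2), then the compressed operators F'_k = Π' F_k Π' (k = 1, 2, ?) are positive semidefinite, satisfy F'1 + F'2 + F'? = Π', and satisfy Tr(ρ'1 F'2) = 0 and Tr(ρ'2 F'1) = 0; moreover the supports of ρ'1 and ρ'2 intersect trivially. -/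

import Mathlib

open Matrix ComplexOrder

noncomputable section

abbrev Mat (n : ℕ) := Matrix (Fin n) (Fin n) ℂ

/-- The support (range) of a matrix, viewed as an operator on Euclidean space. -/
def MatSupport {n : ℕ} (A : Mat n) : Submodule ℂ (EuclideanSpace ℂ (Fin n)) :=
  LinearMap.range (Matrix.toEuclideanLin A)

/-- The matrix of the orthogonal projection onto a subspace of Euclidean space. -/
def projMat {n : ℕ} (K : Submodule ℂ (EuclideanSpace ℂ (Fin n))) : Mat n :=
  Matrix.toEuclideanLin.symm (K.subtype ∘ₗ (Submodule.orthogonalProjection K).toLinearMap)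

/-- A density matrix: positive semidefinite (hence Hermitian) with trace one. -/
def IsDensity {n : ℕ} (ρ : Mat n) : Prop := ρ.PosSemidef ∧ ρ.trace = 1

/-- A USD POVM for the pair (ρ1, ρ2). -/
def IsUSD {n : ℕ} (ρ1 ρ2 F1 F2 Fq : Mat n) : Prop :=
  F1.PosSemidef ∧ F2.PosSemidef ∧ Fq.PosSemidef ∧ F1 + F2 + Fq = 1 ∧
  (ρ1 * F2).trace = 0 ∧ (ρ2 * F1).trace = 0

/-- Failure probability of a USD POVM with inconclusive element `Fq`. -/
def failQ {n : ℕ} (p1 p2 : ℝ) (ρ1 ρ2 Fq : Mat n) : ℝ :=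
  p1 * ((ρ1 * Fq).trace).re + p2 * ((ρ2 * Fq).trace).re


variable {n : ℕ}

lemma toEL_mul (A B : Mat n) :
    Matrix.toEuclideanLin (A * B) = (Matrix.toEuclideanLin A) ∘ₗ (Matrix.toEuclideanLin B) := by
  refine LinearMap.ext fun v => ?_
  simp [Matrix.toEuclideanLin_apply, Matrix.mulVec_mulVec]

lemma toEL_projMat (K : Submodule ℂ (EuclideanSpace ℂ (Fin n))) :
    Matrix.toEuclideanLin (projMat K) = K.subtype ∘ₗ (Submodule.orthogonalProjection K).toLinearMap := by
  simp [projMat]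

lemma projMat_apply (K : Submodule ℂ (EuclideanSpace ℂ (Fin n))) (x : EuclideanSpace ℂ (Fin n)) :
    Matrix.toEuclideanLin (projMat K) x = (Submodule.orthogonalProjection K x : EuclideanSpace ℂ (Fin n)) := by
  rw [toEL_projMat]; rfl

lemma projMat_conjTranspose (K : Submodule ℂ (EuclideanSpace ℂ (Fin n))) :
    (projMat K)ᴴ = projMat K := by
  apply Matrix.toEuclideanLin.injective
  rw [Matrix.toEuclideanLin_conjTranspose_eq_adjoint, toEL_projMat]
  have hs : (K.subtype ∘ₗ (Submodule.orthogonalProjection K).toLinearMap).IsSymmetric := by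
    intro x y
    exact Submodule.inner_starProjection_left_eq_right K x y
  have := (LinearMap.isSymmetric_iff_isSelfAdjoint _).mp hs
  rw [← LinearMap.star_eq_adjoint]
  exact this

lemma projMat_mul_self (K : Submodule ℂ (EuclideanSpace ℂ (Fin n))) :
    projMat K * projMat K = projMat K := by
  apply Matrix.toEuclideanLin.injective
  rw [toEL_mul, toEL_projMat]
  refine LinearMap.ext fun x => ?_
  simp [Submodule.orthogonalProjectionOnto_mem_subspace_eq_self]
  exact Submodule.starProjection_eq_self_iff.mpr (K.orthogonalProjectionOnto x).2

lemma eq_zero_of_trace_conjTranspose_mul_self {A : Mat n} (h : (Aᴴ * A).trace = 0) : A = 0 := by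
  have hre : ∑ j, ∑ k, Complex.normSq (A k j) = 0 := by
    have ht : (Aᴴ * A).trace = ((∑ j, ∑ k, Complex.normSq (A k j) : ℝ) : ℂ) := by
      simp only [Matrix.trace, Matrix.diag, Matrix.mul_apply, Matrix.conjTranspose_apply]
      push_cast
      simp [Complex.normSq_eq_conj_mul_self]
    rw [ht] at h
    exact_mod_cast h
  ext i j
  have h1 : ∀ j ∈ Finset.univ, ∑ k, Complex.normSq (A k j) = 0 := by
    intro j _
    have := (Finset.sum_eq_zero_iff_of_nonneg (fun j _ =>
      Finset.sum_nonneg fun k _ => Complex.normSq_nonneg _)).mp hre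
    exact this j (Finset.mem_univ j)
  have h2 := (Finset.sum_eq_zero_iff_of_nonneg (fun k _ => Complex.normSq_nonneg _)).mp
    (h1 j (Finset.mem_univ j)) i (Finset.mem_univ i)
  simpa using Complex.normSq_eq_zero.mp h2

open scoped MatrixOrder in
lemma mul_eq_zero_of_trace_eq_zero {ρ F : Mat n} (hρ : ρ.PosSemidef) (hF : F.PosSemidef)
    (h : (ρ * F).trace = 0) : ρ * F = 0 := by
  set S := CFC.sqrt ρ with hSdef
  set T := CFC.sqrt F with hTdef
  have hS : S * S = ρ := CFC.sqrt_mul_sqrt_self ρ hρ.nonneg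
  have hT : T * T = F := CFC.sqrt_mul_sqrt_self F hF.nonneg
  have hSH : Sᴴ = S := (CFC.sqrt_nonneg ρ).posSemidef.1
  have hTH : Tᴴ = T := (CFC.sqrt_nonneg F).posSemidef.1
  have key : ((S * T)ᴴ * (S * T)).trace = 0 := by
    rw [Matrix.conjTranspose_mul, hSH, hTH]
    have e : T * S * (S * T) = T * (S * S * T) := by
      rw [mul_assoc, mul_assoc]
    rw [e, Matrix.trace_mul_comm, mul_assoc, hS, hT, h]
  have hST : S * T = 0 := eq_zero_of_trace_conjTranspose_mul_self key
  have e2 : ρ * F = S * (S * T) * T := by rw [← hS, ← hT]; simp [mul_assoc]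
  rw [e2, hST, mul_zero, zero_mul]

lemma mul_projMat_orthogonal_eq_self {M : Mat n} {K : Submodule ℂ (EuclideanSpace ℂ (Fin n))}
    (h : ∀ x ∈ K, Matrix.toEuclideanLin M x = 0) :
    M * projMat Kᗮ = M := by
  apply Matrix.toEuclideanLin.injective
  rw [toEL_mul, toEL_projMat]
  refine LinearMap.ext fun x => ?_
  have hx : (Submodule.orthogonalProjection K x : EuclideanSpace ℂ (Fin n)) +
      (Submodule.orthogonalProjection Kᗮ x : EuclideanSpace ℂ (Fin n)) = x :=
    Submodule.starProjection_add_starProjection_orthogonal (K := K) x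
  have : Matrix.toEuclideanLin M x =
      Matrix.toEuclideanLin M (Submodule.orthogonalProjection K x : EuclideanSpace ℂ (Fin n)) +
      Matrix.toEuclideanLin M (Submodule.orthogonalProjection Kᗮ x : EuclideanSpace ℂ (Fin n)) := by
    rw [← map_add, hx]
  simp only [LinearMap.comp_apply]
  rw [this, h _ (Submodule.orthogonalProjection K x).2, zero_add]
  rfl

/-- Compressing a USD POVM with the projection `P'` onto the orthogonal
complement of the common subspace yields positive semidefinite operators summing to `P'`
that form a USD POVM (in the compressed sense) for the normalized compressed states
`ρᵢ' = P' ρᵢ P' / Nᵢ`, whose supports intersect trivially. -/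
theorem usd_povm_compression {n : ℕ} (ρ1 ρ2 : Mat n)
    (h1 : IsDensity ρ1) (h2 : IsDensity ρ2)
    (P' : Mat n) (hP' : P' = projMat ((MatSupport ρ1 ⊓ MatSupport ρ2)ᗮ))
    (N1 N2 : ℝ) (hN1 : N1 = ((ρ1 * P').trace).re) (hN2 : N2 = ((ρ2 * P').trace).re)
    (hN1pos : 0 < N1) (hN2pos : 0 < N2)
    (ρ1' ρ2' : Mat n)
    (hρ1' : ρ1' = ((N1 : ℂ))⁻¹ • (P' * ρ1 * P'))
    (hρ2' : ρ2' = ((N2 : ℂ))⁻¹ • (P' * ρ2 * P'))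
    (F1 F2 Fq : Mat n) (hUSD : IsUSD ρ1 ρ2 F1 F2 Fq) :
    (P' * F1 * P').PosSemidef ∧ (P' * F2 * P').PosSemidef ∧ (P' * Fq * P').PosSemidef ∧
    P' * F1 * P' + P' * F2 * P' + P' * Fq * P' = P' ∧
    (ρ1' * (P' * F2 * P')).trace = 0 ∧ (ρ2' * (P' * F1 * P')).trace = 0 ∧
    MatSupport ρ1' ⊓ MatSupport ρ2' = ⊥ := by
  obtain ⟨hρ1psd, -⟩ := h1
  obtain ⟨hρ2psd, -⟩ := h2
  obtain ⟨hF1, hF2, hFq, hsum, ht1, ht2⟩ := hUSD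
  set K : Submodule ℂ (EuclideanSpace ℂ (Fin n)) := MatSupport ρ1 ⊓ MatSupport ρ2 with hK
  have hP'H : P'ᴴ = P' := by rw [hP']; exact projMat_conjTranspose _
  have hP'P' : P' * P' = P' := by rw [hP']; exact projMat_mul_self _
  -- positive semidefiniteness
  have psd : ∀ F : Mat n, F.PosSemidef → (P' * F * P').PosSemidef := by
    intro F hF
    have := hF.mul_mul_conjTranspose_same P'
    rwa [hP'H] at this
  -- products vanish
  have hρ1F2 : ρ1 * F2 = 0 := mul_eq_zero_of_trace_eq_zero hρ1psd hF2 ht1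
  have hρ2F1 : ρ2 * F1 = 0 := mul_eq_zero_of_trace_eq_zero hρ2psd hF1 ht2
  have hF2ρ1 : F2 * ρ1 = 0 := by
    have := congrArg Matrix.conjTranspose hρ1F2
    rwa [Matrix.conjTranspose_mul, hF2.1, hρ1psd.1, Matrix.conjTranspose_zero] at this
  have hF1ρ2 : F1 * ρ2 = 0 := by
    have := congrArg Matrix.conjTranspose hρ2F1
    rwa [Matrix.conjTranspose_mul, hF1.1, hρ2psd.1, Matrix.conjTranspose_zero] at this
  -- F2 is killed by K (via support of ρ1), F1 by K (via support of ρ2)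
  have hF2P' : F2 * P' = F2 := by
    rw [hP']
    apply mul_projMat_orthogonal_eq_self
    intro x hx
    obtain ⟨y, hy⟩ := (inf_le_left : K ≤ MatSupport ρ1) hx
    rw [← hy, ← LinearMap.comp_apply, ← toEL_mul, hF2ρ1]
    simp
  have hF1P' : F1 * P' = F1 := by
    rw [hP']
    apply mul_projMat_orthogonal_eq_self
    intro x hx
    obtain ⟨y, hy⟩ := (inf_le_right : K ≤ MatSupport ρ2) hx
    rw [← hy, ← LinearMap.comp_apply, ← toEL_mul, hF1ρ2]
    simp
  have hP'F2 : P' * F2 = F2 := by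
    have := congrArg Matrix.conjTranspose hF2P'
    rwa [Matrix.conjTranspose_mul, hF2.1, hP'H] at this
  have hP'F1 : P' * F1 = F1 := by
    have := congrArg Matrix.conjTranspose hF1P'
    rwa [Matrix.conjTranspose_mul, hF1.1, hP'H] at this
  refine ⟨psd F1 hF1, psd F2 hF2, psd Fq hFq, ?_, ?_, ?_, ?_⟩
  · have : P' * (F1 + F2 + Fq) * P' = P' * 1 * P' := by rw [hsum]
    simpa [Matrix.mul_add, Matrix.add_mul, hP'P'] using this
  · have e2 : P' * F2 * P' = F2 := by rw [hP'F2, hF2P']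
    have hz : P' * ρ1 * P' * (P' * F2 * P') = 0 := by
      rw [e2, mul_assoc, hP'F2, mul_assoc, hρ1F2, mul_zero]
    rw [hρ1', smul_mul_assoc, hz, smul_zero, Matrix.trace_zero]
  · have e1 : P' * F1 * P' = F1 := by rw [hP'F1, hF1P']
    have hz : P' * ρ2 * P' * (P' * F1 * P') = 0 := by
      rw [e1, mul_assoc, hP'F1, mul_assoc, hρ2F1, mul_zero]
    rw [hρ2', smul_mul_assoc, hz, smul_zero, Matrix.trace_zero]
  · -- supports intersect trivially
    rw [Submodule.eq_bot_iff]
    intro x hx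
    obtain ⟨hx1, hx2⟩ := Submodule.mem_inf.mp hx
    obtain ⟨u, hu⟩ := hx1
    obtain ⟨v, hv⟩ := hx2
    have mem1 : ∃ y ∈ MatSupport ρ1, Matrix.toEuclideanLin P' y = x := by
      refine ⟨Matrix.toEuclideanLin ρ1 (Matrix.toEuclideanLin P' (((N1 : ℂ))⁻¹ • u)),
        ⟨_, rfl⟩, ?_⟩
      rw [← hu, hρ1']
      simp [toEL_mul, _root_.map_smul]
    have mem2 : ∃ y ∈ MatSupport ρ2, Matrix.toEuclideanLin P' y = x := by
      refine ⟨Matrix.toEuclideanLin ρ2 (Matrix.toEuclideanLin P' (((N2 : ℂ))⁻¹ • v)),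
        ⟨_, rfl⟩, ?_⟩
      rw [← hv, hρ2']
      simp [toEL_mul, _root_.map_smul]
    obtain ⟨y1, hy1mem, hy1⟩ := mem1
    obtain ⟨y2, hy2mem, hy2⟩ := mem2
    have h0 : Matrix.toEuclideanLin P' (y1 - y2) = 0 := by
      rw [map_sub, hy1, hy2, sub_self]
    rw [hP', projMat_apply] at h0
    have hproj0 : Submodule.orthogonalProjection Kᗮ (y1 - y2) = 0 := by
      exact_mod_cast h0
    have hzK : y1 - y2 ∈ K := by
      have hz : (Submodule.orthogonalProjection K (y1 - y2) : EuclideanSpace ℂ (Fin n)) +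
          (Submodule.orthogonalProjection Kᗮ (y1 - y2) : EuclideanSpace ℂ (Fin n)) = y1 - y2 :=
        Submodule.starProjection_add_starProjection_orthogonal (K := K) (y1 - y2)
      rw [hproj0, Submodule.coe_zero, add_zero] at hz
      rw [← hz]
      exact (Submodule.orthogonalProjection K (y1 - y2)).2
    have hy1K : y1 ∈ K := by
      refine Submodule.mem_inf.mpr ⟨hy1mem, ?_⟩
      have : (y1 - y2) + y2 = y1 := sub_add_cancel y1 y2
      rw [← this]
      exact Submodule.add_mem _ ((inf_le_right : K ≤ MatSupport ρ2) hzK) hy2mem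
    rw [← hy1, hP', projMat_apply,
      Submodule.orthogonalProjectionOnto_apply_of_mem_orthogonal
        (K.le_orthogonal_orthogonal hy1K), Submodule.coe_zero]
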